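/- arXiv:math/0512096 — 3 statements merged into one kernel-verified Lean document; each statement's English description precedes it below -/
import Mathlib

section
/- Let μ ∈ ℂ with Re μ < -1, let g ∈ SL(2,ℝ), and let φ be a continuous function on the unit circle S. Then A_μ(π_μ⁻(g)φ) = π_{-μ-2}⁺(g)(A_μ φ) as functions on S, where A_μ is the intertwining operator with kernel |⟨s,t⟩|^{-μ-2}. -/
open MeasureTheory Real Complex Matrix
open scoped Real

/-- The Euclidean norm on `ℝ²`. -/
noncomputable def vnorm (v : Fin 2 → ℝ) : ℝ := Real.sqrt (v 0 ^ 2 + v 1 ^ 2)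

/-- The arc-length parametrization `θ ↦ (cos θ, sin θ)` of the unit circle `S ⊂ ℝ²`. -/
noncomputable def circ (θ : ℝ) : Fin 2 → ℝ := ![Real.cos θ, Real.sin θ]

/-- The representation `π_μ⁻` of `SL(2,ℝ)`:
`(π_μ⁻(g)φ)(s) = φ(g⁻¹.s) ‖g⁻¹·s‖^μ`. -/
noncomputable def piMinus (μ : ℂ) (g : Matrix.SpecialLinearGroup (Fin 2) ℝ)
    (φ : (Fin 2 → ℝ) → ℂ) : (Fin 2 → ℝ) → ℂ :=
  fun s =>
    φ ((vnorm ((g⁻¹).1.mulVec s))⁻¹ • (g⁻¹).1.mulVec s) *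
      ((vnorm ((g⁻¹).1.mulVec s) : ℂ)) ^ μ

/-- The representation `π_μ⁺` of `SL(2,ℝ)`:
`(π_μ⁺(g)φ)(s) = φ(θ(g⁻¹).s) ‖θ(g⁻¹)·s‖^μ`, where `θ(h) = (hᵀ)⁻¹`. -/
noncomputable def piPlus (μ : ℂ) (g : Matrix.SpecialLinearGroup (Fin 2) ℝ)
    (φ : (Fin 2 → ℝ) → ℂ) : (Fin 2 → ℝ) → ℂ :=
  fun s =>
    φ ((vnorm ((((g⁻¹).1)ᵀ)⁻¹.mulVec s))⁻¹ • (((g⁻¹).1)ᵀ)⁻¹.mulVec s) *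
      ((vnorm ((((g⁻¹).1)ᵀ)⁻¹.mulVec s) : ℂ)) ^ μ

/-- The intertwining operator `(A_μ φ)(s) = ∫_S |⟨s,t⟩|^{-μ-2} φ(t) dt`. -/
noncomputable def Aop (μ : ℂ) (φ : (Fin 2 → ℝ) → ℂ) : (Fin 2 → ℝ) → ℂ :=
  fun s => ∫ θ in (0 : ℝ)..(2 * π),
    ((|s 0 * circ θ 0 + s 1 * circ θ 1| : ℝ) : ℂ) ^ (-μ - 2) * φ (circ θ)

private lemma exp_half_log {x : ℝ} (hx : 0 < x) :
    Real.exp (Real.log x / 2) = Real.sqrt x := by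
  have h2 : Real.exp (Real.log x / 2) ^ 2 = x := by
    rw [sq, ← Real.exp_add, show Real.log x / 2 + Real.log x / 2 = Real.log x by ring]
    exact Real.exp_log hx
  calc Real.exp (Real.log x / 2) = Real.sqrt (Real.exp (Real.log x / 2) ^ 2) :=
        (Real.sqrt_sq (Real.exp_pos _).le).symm
    _ = Real.sqrt x := by rw [h2]

set_option maxHeartbeats 1000000 in
private lemma key_param (a b c d : ℝ) (hdet : a * d - b * c = 1)
    (U V ρ : ℝ → ℝ)
    (hU : U = fun θ => a * Real.cos θ + b * Real.sin θ)
    (hV : V = fun θ => c * Real.cos θ + d * Real.sin θ)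
    (hρ : ρ = fun θ => U θ ^ 2 + V θ ^ 2) :
    ∃ h : ℝ → ℝ,
      (∀ θ, 0 < ρ θ) ∧
      (∀ θ, HasDerivAt h ((ρ θ)⁻¹) θ) ∧
      (∀ θ, U θ = Real.sqrt (ρ θ) * Real.cos (h θ) ∧
            V θ = Real.sqrt (ρ θ) * Real.sin (h θ)) ∧
      StrictMono h ∧ h (2 * π) = h 0 + 2 * π := by
  subst hU hV hρ
  -- abbreviations
  set U : ℝ → ℝ := fun θ => a * Real.cos θ + b * Real.sin θ with hUdef
  set V : ℝ → ℝ := fun θ => c * Real.cos θ + d * Real.sin θ with hVdef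
  set ρ : ℝ → ℝ := fun θ => U θ ^ 2 + V θ ^ 2 with hρdef
  have hρeq : ∀ θ, ρ θ = U θ ^ 2 + V θ ^ 2 := fun θ => rfl
  have hρpos : ∀ θ, 0 < ρ θ := by
    intro θ
    rcases lt_or_eq_of_le (by rw [hρeq]; positivity : (0:ℝ) ≤ ρ θ) with h | h
    · exact h
    exfalso
    have hU0 : U θ = 0 := by
      have h2 : U θ ^ 2 = 0 := by
        have := hρeq θ
        nlinarith [sq_nonneg (U θ), sq_nonneg (V θ)]
      exact pow_eq_zero_iff two_ne_zero |>.mp h2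
    have hV0 : V θ = 0 := by
      have h2 : V θ ^ 2 = 0 := by
        have := hρeq θ
        nlinarith [sq_nonneg (U θ), sq_nonneg (V θ)]
      exact pow_eq_zero_iff two_ne_zero |>.mp h2
    have hc : Real.cos θ = 0 := by
      have : d * U θ - b * V θ = Real.cos θ := by
        simp only [hUdef, hVdef]
        linear_combination Real.cos θ * hdet
      rw [hU0, hV0] at this; linarith
    have hs : Real.sin θ = 0 := by
      have : a * V θ - c * U θ = Real.sin θ := by
        simp only [hUdef, hVdef]
        linear_combination Real.sin θ * hdet
      rw [hU0, hV0] at this; linarith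
    nlinarith [Real.sin_sq_add_cos_sq θ]
  -- derivatives
  have hUd : ∀ θ, HasDerivAt U (b * Real.cos θ - a * Real.sin θ) θ := by
    intro θ
    have := ((Real.hasDerivAt_cos θ).const_mul a).add ((Real.hasDerivAt_sin θ).const_mul b)
    refine this.congr_deriv ?_; ring
  have hVd : ∀ θ, HasDerivAt V (d * Real.cos θ - c * Real.sin θ) θ := by
    intro θ
    have := ((Real.hasDerivAt_cos θ).const_mul c).add ((Real.hasDerivAt_sin θ).const_mul d)
    refine this.congr_deriv ?_; ring
  set U' : ℝ → ℝ := fun θ => b * Real.cos θ - a * Real.sin θ with hU'def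
  set V' : ℝ → ℝ := fun θ => d * Real.cos θ - c * Real.sin θ with hV'def
  have hcross : ∀ θ, U θ * V' θ - V θ * U' θ = 1 := by
    intro θ
    simp only [hUdef, hVdef, hU'def, hV'def]
    linear_combination (Real.sin θ ^ 2 + Real.cos θ ^ 2) * hdet + Real.sin_sq_add_cos_sq θ
  have hρd : ∀ θ, HasDerivAt ρ (2 * U θ * U' θ + 2 * V θ * V' θ) θ := by
    intro θ
    have := ((hUd θ).pow 2).add ((hVd θ).pow 2)
    refine this.congr_deriv ?_; push_cast; ring
  have hρcont : Continuous ρ := by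
    simp only [hρdef, hUdef, hVdef]; fun_prop
  have hρinvcont : Continuous fun θ => (ρ θ)⁻¹ :=
    hρcont.inv₀ fun θ => (hρpos θ).ne'
  -- the complex curve
  set w : ℝ → ℂ := fun θ => (U θ : ℂ) + (V θ : ℂ) * Complex.I with hwdef
  have hwne : ∀ θ, w θ ≠ 0 := by
    intro θ h0
    have hre : U θ = 0 ∧ V θ = 0 := by
      constructor
      · have := congrArg Complex.re h0
        simpa [hwdef] using this
      · have := congrArg Complex.im h0
        simpa [hwdef] using this
    have := hρpos θ
    simp only [hρdef, hre.1, hre.2] at this; norm_num at this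
  -- angle function
  set h : ℝ → ℝ := fun θ => Complex.arg (w 0) + ∫ t in (0:ℝ)..θ, (ρ t)⁻¹ with hhdef
  have hhd : ∀ θ, HasDerivAt h ((ρ θ)⁻¹) θ := by
    intro θ
    have hint : IntervalIntegrable (fun t => (ρ t)⁻¹) volume 0 θ :=
      hρinvcont.intervalIntegrable _ _
    have := intervalIntegral.integral_hasDerivAt_right hint
      (hρinvcont.stronglyMeasurableAtFilter _ _) hρinvcont.continuousAt
    exact this.const_add _
  -- log-modulus
  set L : ℝ → ℝ := fun θ => Real.log (ρ θ) / 2 with hLdef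
  set L' : ℝ → ℝ := fun θ => (U θ * U' θ + V θ * V' θ) / ρ θ with hL'def
  have hLd : ∀ θ, HasDerivAt L (L' θ) θ := by
    intro θ
    have := ((Real.hasDerivAt_log (hρpos θ).ne').comp θ (hρd θ)).div_const 2
    refine this.congr_deriv ?_
    simp only [hL'def]
    ring
  set E : ℝ → ℂ := fun θ => (L θ : ℂ) + (h θ : ℂ) * Complex.I with hEdef
  have hEd : ∀ θ, HasDerivAt E ((L' θ : ℂ) + ((ρ θ)⁻¹ : ℝ) * Complex.I) θ := by
    intro θ
    exact (hLd θ).ofReal_comp.add (((hhd θ).ofReal_comp).mul_const Complex.I)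
  have hwd : ∀ θ, HasDerivAt w ((U' θ : ℂ) + (V' θ : ℂ) * Complex.I) θ := by
    intro θ
    exact (hUd θ).ofReal_comp.add (((hVd θ).ofReal_comp).mul_const Complex.I)
  -- key differential identity
  have hwE : ∀ θ, w θ * ((L' θ : ℂ) + ((ρ θ)⁻¹ : ℝ) * Complex.I) = (U' θ : ℂ) + (V' θ : ℂ) * Complex.I := by
    intro θ
    have hρθ : ρ θ = U θ ^ 2 + V θ ^ 2 := rfl
    have hρne : ρ θ ≠ 0 := (hρpos θ).ne'
    have key1 : U θ * (U θ * U' θ + V θ * V' θ) - V θ = U' θ * ρ θ := by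
      rw [hρθ]; linear_combination (V θ) * hcross θ
    have key2 : V θ * (U θ * U' θ + V θ * V' θ) + U θ = V' θ * ρ θ := by
      rw [hρθ]; linear_combination (-(U θ)) * hcross θ
    have hre : U θ * L' θ - V θ * (ρ θ)⁻¹ = U' θ := by
      simp only [hL'def]
      field_simp
      linear_combination key1
    have him : V θ * L' θ + U θ * (ρ θ)⁻¹ = V' θ := by
      simp only [hL'def]
      field_simp
      linear_combination key2
    have hreC : (U θ : ℂ) * (L' θ : ℂ) - (V θ : ℂ) * (((ρ θ)⁻¹ : ℝ) : ℂ) = (U' θ : ℂ) := by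
      exact_mod_cast congrArg (Complex.ofReal) hre
    have himC : (V θ : ℂ) * (L' θ : ℂ) + (U θ : ℂ) * (((ρ θ)⁻¹ : ℝ) : ℂ) = (V' θ : ℂ) := by
      exact_mod_cast congrArg (Complex.ofReal) him
    simp only [hwdef]
    linear_combination hreC + Complex.I * himC +
      ((V θ : ℂ) * (((ρ θ)⁻¹ : ℝ) : ℂ)) * Complex.I_sq
  -- the quotient is constant
  set q : ℝ → ℂ := fun θ => w θ * Complex.exp (-E θ) with hqdef
  have hqd : ∀ θ, HasDerivAt q 0 θ := by
    intro θ
    have := (hwd θ).mul ((hEd θ).neg.cexp)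
    refine this.congr_deriv ?_
    rw [← hwE θ]
    ring
  have hqconst : ∀ θ, q θ = q 0 :=
    fun θ => is_const_of_deriv_eq_zero (fun x => (hqd x).differentiableAt)
      (fun x => (hqd x).deriv) θ 0
  -- q 0 = 1
  have habs : ∀ θ, ‖w θ‖ = Real.sqrt (ρ θ) := by
    intro θ
    rw [hwdef]
    simp only []
    rw [Complex.norm_def, Complex.normSq_add_mul_I]
  have hexpL : ∀ θ, Real.exp (L θ) = Real.sqrt (ρ θ) := fun θ => exp_half_log (hρpos θ)
  have hq0 : q 0 = 1 := by
    have hh0 : h 0 = Complex.arg (w 0) := by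
      simp [hhdef, intervalIntegral.integral_same]
    have : Complex.exp (E 0) = w 0 := by
      simp only [hEdef, hh0]
      rw [Complex.exp_add]
      rw [← Complex.ofReal_exp, hexpL 0, ← habs 0]
      exact Complex.norm_mul_exp_arg_mul_I (w 0)
    simp only [hqdef, Complex.exp_neg, this]
    exact mul_inv_cancel₀ (hwne 0)
  have hmain : ∀ θ, w θ = Complex.exp (E θ) := by
    intro θ
    have h1 : q θ = 1 := (hqconst θ).trans hq0
    simp only [hqdef, Complex.exp_neg] at h1
    field_simp at h1
    exact h1
  -- polar decomposition
  have hpolar : ∀ θ, U θ = Real.sqrt (ρ θ) * Real.cos (h θ) ∧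
      V θ = Real.sqrt (ρ θ) * Real.sin (h θ) := by
    intro θ
    have := hmain θ
    rw [hEdef] at this
    simp only [] at this
    rw [Complex.exp_add, Complex.exp_mul_I, ← Complex.ofReal_cos, ← Complex.ofReal_sin] at this
    rw [← Complex.ofReal_exp, hexpL θ] at this
    have hre := congrArg Complex.re this
    have him := congrArg Complex.im this
    constructor
    · simpa [hwdef, Complex.mul_re, Complex.mul_im, Complex.cos_ofReal_re, Complex.sin_ofReal_re] using hre
    · simpa [hwdef, Complex.mul_re, Complex.mul_im, Complex.cos_ofReal_re, Complex.sin_ofReal_re] using him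
  -- strict monotonicity
  have hmono : StrictMono h := by
    apply strictMono_of_deriv_pos
    intro x
    rw [(hhd x).deriv]
    exact inv_pos.2 (hρpos x)
  -- periodicity
  have hper : h (2 * π) = h 0 + 2 * π := by
    have hU2 : U (2 * π) = U 0 := by
      simp [hUdef, Real.cos_two_pi, Real.sin_two_pi]
    have hV2 : V (2 * π) = V 0 := by
      simp [hVdef, Real.cos_two_pi, Real.sin_two_pi]
    have hρ2 : ρ (2 * π) = ρ 0 := by simp [hρdef, hU2, hV2]
    have hL2 : L (2 * π) = L 0 := by simp [hLdef, hρ2]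
    have hw2 : w (2 * π) = w 0 := by simp [hwdef, hU2, hV2]
    have hexp : Complex.exp (E (2 * π) - E 0) = 1 := by
      rw [Complex.exp_sub, ← hmain (2 * π), ← hmain 0, hw2]
      exact div_self (hwne 0)
    have hEdiff : E (2 * π) - E 0 = ((h (2 * π) - h 0 : ℝ) : ℂ) * Complex.I := by
      simp only [hEdef, hL2]
      push_cast
      ring
    rw [hEdiff] at hexp
    obtain ⟨n, hn⟩ := Complex.exp_eq_one_iff.mp hexp
    have hnr : h (2 * π) - h 0 = n * (2 * π) := by
      have hI : ((h (2 * π) - h 0 : ℝ) : ℂ) = (n : ℂ) * (2 * (π : ℂ)) := by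
        have := hn
        rw [show ((n : ℂ) * (2 * (π:ℂ) * Complex.I)) = ((n:ℂ) * (2 * (π:ℂ))) * Complex.I by ring] at this
        exact mul_right_cancel₀ Complex.I_ne_zero this
      exact_mod_cast hI
    have hpos : h 0 < h (2 * π) := hmono (by positivity)
    have hn1 : 1 ≤ n := by
      by_contra hlt
      push_neg at hlt
      have hn0 : n ≤ 0 := by omega
      have : (n : ℝ) ≤ 0 := by exact_mod_cast hn0
      nlinarith [Real.pi_pos]
    have hn2 : n < 2 := by
      by_contra hge
      push_neg at hge
      -- IVT argument
      have hcont : Continuous h := by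
        apply continuous_iff_continuousAt.mpr
        exact fun x => (hhd x).continuousAt
      have h2n : (2 : ℝ) ≤ (n : ℝ) := by exact_mod_cast hge
      have hmem : h 0 + 2 * π ∈ Set.Icc (h 0) (h (2 * π)) := by
        constructor
        · nlinarith [Real.pi_pos]
        · nlinarith [Real.pi_pos, hnr, h2n]
      obtain ⟨θ2, hθ2mem, hθ2⟩ :=
        intermediate_value_Icc (by positivity : (0:ℝ) ≤ 2 * π) hcont.continuousOn hmem
      have hθ2pos : 0 < θ2 := by
        rcases lt_or_eq_of_le hθ2mem.1 with h' | h'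
        · exact h'
        · exfalso; rw [← h'] at hθ2; nlinarith [Real.pi_pos]
      have hθ2lt : θ2 < 2 * π := by
        rcases lt_or_eq_of_le hθ2mem.2 with h' | h'
        · exact h'
        · exfalso
          rw [h'] at hθ2
          nlinarith [Real.pi_pos, hnr, h2n, hθ2]
      -- trig consequences
      have hcos2 : Real.cos (h θ2) = Real.cos (h 0) := by rw [hθ2, Real.cos_add_two_pi]
      have hsin2 : Real.sin (h θ2) = Real.sin (h 0) := by rw [hθ2, Real.sin_add_two_pi]
      obtain ⟨hUθ2, hVθ2⟩ := hpolar θ2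
      obtain ⟨hU0', hV0'⟩ := hpolar 0
      set lam : ℝ := Real.sqrt (ρ θ2) / Real.sqrt (ρ 0) with hlamdef
      have hsρ0 : 0 < Real.sqrt (ρ 0) := Real.sqrt_pos.2 (hρpos 0)
      have hsρ2 : 0 < Real.sqrt (ρ θ2) := Real.sqrt_pos.2 (hρpos θ2)
      have hlampos : 0 < lam := div_pos hsρ2 hsρ0
      have hUlam : U θ2 = lam * U 0 := by
        rw [hUθ2, hU0', hcos2, hlamdef]; field_simp
      have hVlam : V θ2 = lam * V 0 := by
        rw [hVθ2, hV0', hsin2, hlamdef]; field_simp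
      have hU0v : U 0 = a := by simp [hUdef]
      have hV0v : V 0 = c := by simp [hVdef]
      have hsinθ2 : Real.sin θ2 = 0 := by
        have : a * V θ2 - c * U θ2 = Real.sin θ2 := by
          simp only [hUdef, hVdef]
          linear_combination Real.sin θ2 * hdet
        rw [hUlam, hVlam, hU0v, hV0v] at this
        linear_combination (-1 : ℝ) * this
      have hcosθ2 : Real.cos θ2 = lam := by
        have : d * U θ2 - b * V θ2 = Real.cos θ2 := by
          simp only [hUdef, hVdef]
          linear_combination Real.cos θ2 * hdet
        rw [hUlam, hVlam, hU0v, hV0v] at this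
        linear_combination (-1 : ℝ) * this + lam * hdet
      obtain ⟨m, hm⟩ := Real.sin_eq_zero_iff.mp hsinθ2
      have hm1 : m = 1 := by
        have hmpos : 0 < (m : ℝ) * π := by rw [hm]; exact hθ2pos
        have hmlt : (m : ℝ) * π < 2 * π := by rw [hm]; exact hθ2lt
        have h1 : 0 < m := by
          by_contra hm0
          push_neg at hm0
          have hm0' : (m : ℝ) ≤ 0 := by exact_mod_cast hm0
          have : (m : ℝ) * π ≤ 0 :=
            mul_nonpos_iff.mpr (Or.inr ⟨hm0', Real.pi_pos.le⟩)
          linarith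
        have h2 : m < 2 := by
          by_contra hm2
          push_neg at hm2
          have hm2' : (2 : ℝ) ≤ (m : ℝ) := by exact_mod_cast hm2
          have : 2 * π ≤ (m : ℝ) * π :=
            mul_le_mul_of_nonneg_right hm2' Real.pi_pos.le
          linarith
        omega
      rw [hm1] at hm
      have hθ2π : θ2 = π := by rw [← hm]; push_cast; ring
      rw [hθ2π, Real.cos_pi] at hcosθ2
      linarith
    have : n = 1 := by omega
    rw [this] at hnr
    push_cast at hnr
    linarith
  exact ⟨h, hρpos, hhd, hpolar, hmono, hper⟩

private lemma ofReal_inv_cpow {r : ℝ} (hr : 0 < r) (z : ℂ) :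
    ((r⁻¹ : ℝ) : ℂ) ^ z = (((r : ℝ) : ℂ) ^ z)⁻¹ := by
  rw [Complex.ofReal_inv, Complex.inv_cpow]
  rw [Complex.arg_ofReal_of_nonneg hr.le]
  exact Real.pi_ne_zero.symm

private lemma cpow_ne_zero' {r : ℝ} (hr : 0 < r) (z : ℂ) : ((r : ℝ) : ℂ) ^ z ≠ 0 := by
  intro h
  rcases Complex.cpow_eq_zero_iff _ _ |>.mp h with ⟨h1, _⟩
  have : r = 0 := by exact_mod_cast h1
  exact hr.ne' this

private lemma cpow_arith {r : ℝ} (hr : 0 < r) (μ : ℂ) :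
    (((r ^ 2)⁻¹ : ℝ) : ℂ) * ((r⁻¹ : ℝ) : ℂ) ^ (-μ - 2) = ((r : ℝ) : ℂ) ^ μ := by
  have hrC : ((r : ℝ) : ℂ) ≠ 0 := by exact_mod_cast hr.ne'
  rw [ofReal_inv_cpow hr, ← Complex.cpow_neg]
  have h1 : -(-μ - 2) = μ + 2 := by ring
  rw [h1, Complex.cpow_add _ _ hrC]
  have h2 : ((r : ℝ) : ℂ) ^ (2 : ℂ) = ((r : ℝ) : ℂ) ^ (2 : ℕ) := by
    exact_mod_cast Complex.cpow_natCast (((r : ℝ) : ℂ)) 2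
  push_cast
  rw [h2]
  field_simp


private lemma Aop_smul (μ : ℂ) (φ : (Fin 2 → ℝ) → ℂ) (v : Fin 2 → ℝ) (hv : 0 < vnorm v) :
    Aop μ φ ((vnorm v)⁻¹ • v) * ((vnorm v : ℝ) : ℂ) ^ (-μ - 2)
      = ∫ u in (0:ℝ)..(2 * π),
          ((|v 0 * Real.cos u + v 1 * Real.sin u| : ℝ) : ℂ) ^ (-μ - 2) * φ (circ u) := by
  simp only [Aop]
  rw [mul_comm, ← intervalIntegral.integral_const_mul]
  refine intervalIntegral.integral_congr fun u _ => ?_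
  simp only [Pi.smul_apply, smul_eq_mul, circ, Matrix.cons_val_zero, Matrix.cons_val_one,
    Matrix.head_cons]
  have h1 : |(vnorm v)⁻¹ * v 0 * Real.cos u + (vnorm v)⁻¹ * v 1 * Real.sin u|
      = (vnorm v)⁻¹ * |v 0 * Real.cos u + v 1 * Real.sin u| := by
    rw [show (vnorm v)⁻¹ * v 0 * Real.cos u + (vnorm v)⁻¹ * v 1 * Real.sin u
        = (vnorm v)⁻¹ * (v 0 * Real.cos u + v 1 * Real.sin u) by ring,
      abs_mul, abs_of_pos (inv_pos.2 hv)]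
  rw [h1, Complex.ofReal_mul, Complex.mul_cpow_ofReal_nonneg (inv_pos.2 hv).le (abs_nonneg _),
    ofReal_inv_cpow hv]
  have hne := cpow_ne_zero' hv (-μ - 2)
  field_simp

set_option maxHeartbeats 1000000 in
/-- For `Re μ < -1`, `A_μ` intertwines `π_μ⁻` and `π_{-μ-2}⁺`:
`A_μ (π_μ⁻(g)φ) = π_{-μ-2}⁺(g)(A_μ φ)` on the unit circle. -/
theorem Aop_intertwines (μ : ℂ) (hμ : μ.re < -1)
    (g : Matrix.SpecialLinearGroup (Fin 2) ℝ) (φ : (Fin 2 → ℝ) → ℂ)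
    (hφ : ContinuousOn φ {v | vnorm v = 1}) :
    ∀ s : Fin 2 → ℝ, vnorm s = 1 →
      Aop μ (piMinus μ g φ) s = piPlus (-μ - 2) g (Aop μ φ) s := by
  intro s hs
  set M : Matrix (Fin 2) (Fin 2) ℝ := (g⁻¹).1 with hMdef
  have hdetM : M.det = 1 := (g⁻¹).2
  have hdet : M 0 0 * M 1 1 - M 0 1 * M 1 0 = 1 := by
    rw [Matrix.det_fin_two] at hdetM; linarith
  set U : ℝ → ℝ := fun θ => M 0 0 * Real.cos θ + M 0 1 * Real.sin θ with hUdef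
  set V : ℝ → ℝ := fun θ => M 1 0 * Real.cos θ + M 1 1 * Real.sin θ with hVdef
  set ρ : ℝ → ℝ := fun θ => U θ ^ 2 + V θ ^ 2 with hρdef
  obtain ⟨h, hρpos, hhd, hpolar, hmono, hper⟩ :=
    key_param (M 0 0) (M 0 1) (M 1 0) (M 1 1) hdet U V ρ hUdef hVdef hρdef
  have hρeq : ∀ θ, ρ θ = U θ ^ 2 + V θ ^ 2 := fun θ => rfl
  set r : ℝ → ℝ := fun θ => Real.sqrt (ρ θ) with hrdef
  have hrpos : ∀ θ, 0 < r θ := fun θ => Real.sqrt_pos.2 (hρpos θ)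
  have hr2 : ∀ θ, r θ ^ 2 = ρ θ := fun θ => Real.sq_sqrt (hρpos θ).le
  -- coordinates of M acting on the circle
  have hMv : ∀ θ, M.mulVec (circ θ) = ![U θ, V θ] := by
    intro θ
    funext i
    fin_cases i <;>
      simp [Matrix.mulVec, dotProduct, Fin.sum_univ_two, circ, hUdef, hVdef, Matrix.vecHead, Matrix.vecTail]
  have hvnorm : ∀ θ, vnorm (M.mulVec (circ θ)) = r θ := by
    intro θ
    rw [hMv θ]
    show Real.sqrt ((![U θ, V θ]) 0 ^ 2 + (![U θ, V θ]) 1 ^ 2) = Real.sqrt (ρ θ)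
    simp only [Matrix.cons_val_zero, Matrix.cons_val_one, Matrix.head_cons]
    rfl
  -- the dual vector σ
  set σ : Fin 2 → ℝ := (Mᵀ)⁻¹.mulVec s with hσdef
  have hMTunit : IsUnit (Mᵀ).det := by
    rw [Matrix.det_transpose, hdetM]; exact isUnit_one
  have hMTσ : Mᵀ.mulVec σ = s := by
    rw [hσdef, Matrix.mulVec_mulVec, Matrix.mul_nonsing_inv _ hMTunit, Matrix.one_mulVec]
  have hs0 : M 0 0 * σ 0 + M 1 0 * σ 1 = s 0 := by
    have := congrFun hMTσ 0
    simpa [Matrix.mulVec, dotProduct, Fin.sum_univ_two, Matrix.transpose_apply]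
      using this
  have hs1 : M 0 1 * σ 0 + M 1 1 * σ 1 = s 1 := by
    have := congrFun hMTσ 1
    simpa [Matrix.mulVec, dotProduct, Fin.sum_univ_two, Matrix.transpose_apply]
      using this
  have hsnorm : s 0 ^ 2 + s 1 ^ 2 = 1 := by
    rw [vnorm] at hs
    exact Real.sqrt_eq_one.mp hs
  have hvσ : 0 < vnorm σ := by
    rw [vnorm]
    apply Real.sqrt_pos.2
    rcases lt_or_eq_of_le (by positivity : (0:ℝ) ≤ σ 0 ^ 2 + σ 1 ^ 2) with h' | h'
    · exact h'
    exfalso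
    have hσ0 : σ 0 = 0 := by
      have h2 : σ 0 ^ 2 = 0 := by nlinarith [sq_nonneg (σ 0), sq_nonneg (σ 1)]
      exact pow_eq_zero_iff two_ne_zero |>.mp h2
    have hσ1 : σ 1 = 0 := by
      have h2 : σ 1 ^ 2 = 0 := by nlinarith [sq_nonneg (σ 0), sq_nonneg (σ 1)]
      exact pow_eq_zero_iff two_ne_zero |>.mp h2
    rw [hσ0, hσ1] at hs0 hs1
    simp at hs0 hs1
    rw [← hs0, ← hs1] at hsnorm
    norm_num at hsnorm
  -- the inner product identity
  have hUv : ∀ θ, U θ = M 0 0 * Real.cos θ + M 0 1 * Real.sin θ := fun θ => rfl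
  have hVv : ∀ θ, V θ = M 1 0 * Real.cos θ + M 1 1 * Real.sin θ := fun θ => rfl
  have hinner : ∀ θ, σ 0 * Real.cos (h θ) + σ 1 * Real.sin (h θ)
      = (r θ)⁻¹ * (s 0 * Real.cos θ + s 1 * Real.sin θ) := by
    intro θ
    obtain ⟨hU', hV'⟩ := hpolar θ
    have hrne : r θ ≠ 0 := (hrpos θ).ne'
    field_simp
    linear_combination (-(σ 0)) * hU' + (-(σ 1)) * hV' + σ 0 * hUv θ + σ 1 * hVv θ +
      Real.cos θ * hs0 + Real.sin θ * hs1
  -- the circle identity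
  have hcirch : ∀ θ, circ (h θ) = (vnorm (M.mulVec (circ θ)))⁻¹ • M.mulVec (circ θ) := by
    intro θ
    obtain ⟨hU', hV'⟩ := hpolar θ
    rw [hvnorm θ, hMv θ]
    funext i
    fin_cases i
    · simp only [circ, Matrix.cons_val_zero, Pi.smul_apply, smul_eq_mul]
      rw [hU', show Real.sqrt (ρ θ) = r θ from rfl]
      have hrne : r θ ≠ 0 := (hrpos θ).ne'
      field_simp
      simp [mul_comm]
    · simp only [circ, Matrix.cons_val_one, Matrix.head_cons, Pi.smul_apply, smul_eq_mul]
      rw [hV', show Real.sqrt (ρ θ) = r θ from rfl]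
      have hrne : r θ ≠ 0 := (hrpos θ).ne'
      field_simp
      simp [mul_comm]
  -- the function F
  set F : ℝ → ℂ :=
    fun u => ((|σ 0 * Real.cos u + σ 1 * Real.sin u| : ℝ) : ℂ) ^ (-μ - 2) * φ (circ u)
    with hFdef
  have hFper : Function.Periodic F (2 * π) := by
    intro u
    have hc : Real.cos (u + 2 * π) = Real.cos u := Real.cos_add_two_pi u
    have hsn : Real.sin (u + 2 * π) = Real.sin u := Real.sin_add_two_pi u
    have hcirc : circ (u + 2 * π) = circ u := by
      funext i; fin_cases i <;> simp [circ, hc, hsn]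
    simp only [hFdef, hc, hsn, hcirc]
  have hzero_le : (0:ℝ) ≤ 2 * π := by positivity
  have h2pi_pos : (0:ℝ) < 2 * π := by positivity
  -- RHS computation
  have hRHS : piPlus (-μ - 2) g (Aop μ φ) s = ∫ u in (0:ℝ)..(2 * π), F u := by
    have := Aop_smul μ φ σ hvσ
    exact this
  -- LHS computation
  have hLHS : Aop μ (piMinus μ g φ) s
      = ∫ θ in Set.Ioo (0:ℝ) (2 * π), ((ρ θ)⁻¹ : ℝ) • F (h θ) := by
    simp only [Aop, piMinus]
    rw [intervalIntegral.integral_of_le hzero_le, MeasureTheory.integral_Ioc_eq_integral_Ioo]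
    refine MeasureTheory.setIntegral_congr_fun measurableSet_Ioo fun θ _ => ?_
    rw [← hcirch θ, hvnorm θ]
    simp only [hFdef]
    rw [hinner θ, abs_mul, abs_of_pos (inv_pos.2 (hrpos θ)), Complex.ofReal_mul,
      Complex.mul_cpow_ofReal_nonneg (inv_pos.2 (hrpos θ)).le (abs_nonneg _)]
    simp only [circ, Matrix.cons_val_zero, Matrix.cons_val_one, Matrix.head_cons]
    rw [Complex.real_smul]
    have harith := cpow_arith (hrpos θ) μ
    rw [hr2 θ] at harith
    push_cast at harith ⊢
    linear_combination
      (-(((|s 0 * Real.cos θ + s 1 * Real.sin θ| : ℝ) : ℂ) ^ (-μ - 2) *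
        φ ![Real.cos (h θ), Real.sin (h θ)])) * harith
  -- the change of variables
  have hcont : Continuous h := continuous_iff_continuousAt.mpr fun x => (hhd x).continuousAt
  have himage : h '' Set.Ioo 0 (2 * π) = Set.Ioo (h 0) (h (2 * π)) := by
    apply Set.Subset.antisymm
    · rintro y ⟨x, hx, rfl⟩
      exact ⟨hmono hx.1, hmono hx.2⟩
    · exact intermediate_value_Ioo hzero_le hcont.continuousOn
  have hchange : ∫ θ in Set.Ioo (0:ℝ) (2 * π), ((ρ θ)⁻¹ : ℝ) • F (h θ)
      = ∫ u in Set.Ioo (h 0) (h (2 * π)), F u := by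
    rw [← himage, MeasureTheory.integral_image_eq_integral_abs_deriv_smul measurableSet_Ioo
      (fun x _ => (hhd x).hasDerivWithinAt) (hmono.injective.injOn) F]
    refine MeasureTheory.setIntegral_congr_fun measurableSet_Ioo fun θ _ => ?_
    rw [abs_of_pos (inv_pos.2 (hρpos θ))]
  calc Aop μ (piMinus μ g φ) s
      = ∫ θ in Set.Ioo (0:ℝ) (2 * π), ((ρ θ)⁻¹ : ℝ) • F (h θ) := hLHS
    _ = ∫ u in Set.Ioo (h 0) (h (2 * π)), F u := hchange
    _ = ∫ u in (h 0)..(h (2 * π)), F u := by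
        rw [intervalIntegral.integral_of_le (hmono h2pi_pos).le,
          MeasureTheory.integral_Ioc_eq_integral_Ioo]
    _ = ∫ u in (h 0)..(h 0 + 2 * π), F u := by rw [hper]
    _ = ∫ u in (0:ℝ)..(0 + 2 * π), F u := hFper.intervalIntegral_add_eq (h 0) 0
    _ = ∫ u in (0:ℝ)..(2 * π), F u := by rw [zero_add]
    _ = piPlus (-μ - 2) g (Aop μ φ) s := hRHS.symm
end

section
/- Let u, v, u', v' be unit vectors in ℝ² with ⟨u,v⟩ ≠ 0 and ⟨u',v'⟩ ≠ 0. Then there exist g ∈ SL(2,ℝ) and signs ε, δ ∈ {+1,-1} such that g·u / ‖g·u‖ = ε·u' and θ(g)·v / ‖θ(g)·v‖ = δ·v', where θ(g) = transpose(g)⁻¹. In other words, SL(2,ℝ) acts transitively on the set {(u,v) ∈ S̃×S̃ : ⟨u,v⟩ ≠ 0} via g.(u,v) = (g.u, θ(g).v). -/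
open Matrix

/-- `SL(2,ℝ)` acts transitively on `{(u,v) ∈ S̃ × S̃ : ⟨u,v⟩ ≠ 0}` via
`g.(u,v) = (g.u, θ(g).v)` with `θ(g) = (gᵀ)⁻¹`: given unit vectors `u, v, u', v'` with
`⟨u,v⟩ ≠ 0`, `⟨u',v'⟩ ≠ 0`, there are `g ∈ SL(2,ℝ)` and signs `ε, δ` with
`g·u/‖g·u‖ = ε u'` and `θ(g)·v/‖θ(g)·v‖ = δ v'`. -/
theorem sl2_transitive_on_pairs (u v u' v' : Fin 2 → ℝ)
    (hu : vnorm u = 1) (hv : vnorm v = 1) (hu' : vnorm u' = 1) (hv' : vnorm v' = 1)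
    (huv : u 0 * v 0 + u 1 * v 1 ≠ 0) (huv' : u' 0 * v' 0 + u' 1 * v' 1 ≠ 0) :
    ∃ (g : Matrix.SpecialLinearGroup (Fin 2) ℝ) (ε δ : ℝ),
      (ε = 1 ∨ ε = -1) ∧ (δ = 1 ∨ δ = -1) ∧
      (vnorm (g.1.mulVec u))⁻¹ • g.1.mulVec u = ε • u' ∧
      (vnorm (((g.1)ᵀ)⁻¹.mulVec v))⁻¹ • ((g.1)ᵀ)⁻¹.mulVec v = δ • v' := by
  set c : ℝ := u 0 * v 0 + u 1 * v 1 with hc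
  set c' : ℝ := u' 0 * v' 0 + u' 1 * v' 1 with hc'
  set g : Matrix (Fin 2) (Fin 2) ℝ :=
    !![u' 0 * v 0 / c + v' 1 * u 1 / c', u' 0 * v 1 / c - v' 1 * u 0 / c';
       u' 1 * v 0 / c - v' 0 * u 1 / c', u' 1 * v 1 / c + v' 0 * u 0 / c'] with hg
  have hdet : g.det = 1 := by
    rw [hg, Matrix.det_fin_two_of]
    field_simp
    ring
  -- g sends u to u'
  have hgu : g.mulVec u = u' := by
    funext i
    fin_cases i <;>
      simp [hg, Matrix.mulVec, dotProduct, Fin.sum_univ_two] <;>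
      field_simp <;> ring
  -- the inverse of gᵀ explicitly
  set h : Matrix (Fin 2) (Fin 2) ℝ :=
    !![g 1 1, -(g 1 0); -(g 0 1), g 0 0] with hh
  have hright : gᵀ * h = 1 := by
    have hd : g 0 0 * g 1 1 - g 0 1 * g 1 0 = 1 := by
      rw [← hdet, Matrix.det_fin_two]
    funext i j
    fin_cases i <;> fin_cases j <;>
      simp [hh, Matrix.mul_apply, Fin.sum_univ_two, Matrix.one_apply] <;>
      linarith [hd]
  have hinv : (gᵀ)⁻¹ = h := Matrix.inv_eq_right_inv hright
  -- θ(g) sends v to (c/c') • v'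
  have hθv : h.mulVec v = (c / c') • v' := by
    funext i
    fin_cases i <;>
      simp [hh, hg, Matrix.mulVec, dotProduct, Fin.sum_univ_two] <;>
      field_simp <;> ring
  set r : ℝ := c / c' with hr
  have hrne : r ≠ 0 := div_ne_zero huv huv'
  have hnv' : v' 0 ^ 2 + v' 1 ^ 2 = 1 := by
    have := hv'
    rw [vnorm] at this
    nlinarith [Real.sq_sqrt (by positivity : (0:ℝ) ≤ v' 0 ^ 2 + v' 1 ^ 2)]
  have hvnr : vnorm ((c / c') • v') = |r| := by
    rw [vnorm]
    have : ((c / c') • v') 0 ^ 2 + ((c / c') • v') 1 ^ 2 = r ^ 2 := by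
      simp [Pi.smul_apply, smul_eq_mul, ← hr]
      nlinarith [hnv']
    rw [this, Real.sqrt_sq_eq_abs]
  refine ⟨⟨g, hdet⟩, 1, |r|⁻¹ * r, Or.inl rfl, ?_, ?_, ?_⟩
  · rcases lt_or_gt_of_ne hrne with hlt | hgt
    · right; rw [abs_of_neg hlt]; field_simp
    · left; rw [abs_of_pos hgt]; field_simp
  · show (vnorm (g.mulVec u))⁻¹ • g.mulVec u = (1:ℝ) • u'
    rw [hgu, hu', inv_one, one_smul]
  · show (vnorm ((gᵀ)⁻¹.mulVec v))⁻¹ • (gᵀ)⁻¹.mulVec v = (|r|⁻¹ * r) • v'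
    rw [hinv, hθv, hvnr, smul_smul, hr]
end

section
/- Let g ∈ SL(2,ℝ) and let F be a function on S × S that is integrable with respect to the measure dμ(x,y) = |⟨x,y⟩|^{-2} dx dy. Then ∫_S ∫_S F(g·u/‖g·u‖, θ(g)·v/‖θ(g)·v‖) · |⟨u,v⟩|^{-2} du dv = ∫_S ∫_S F(u,v) · |⟨u,v⟩|^{-2} du dv; that is, the measure |⟨x,y⟩|^{-2} dx dy on S×S is invariant under the action g.(u,v) = (g.u, θ(g).v). -/
open MeasureTheory Real Matrix
open scoped Real

/-- The standard inner product on `ℝ²`. -/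
def ip (u v : Fin 2 → ℝ) : ℝ := u 0 * v 0 + u 1 * v 1

/-- Normalization to the unit circle: `w ↦ w/‖w‖`. -/
noncomputable def nrm (w : Fin 2 → ℝ) : Fin 2 → ℝ := (vnorm w)⁻¹ • w

namespace SxS

noncomputable def P (A B θ : ℝ) : ℝ := A * Real.cos θ + B * Real.sin θ
noncomputable def R (A B C D θ : ℝ) : ℝ := P A B θ ^ 2 + P C D θ ^ 2
noncomputable def lift (A B C D : ℝ) (θ : ℝ) : ℝ :=
  Complex.arg ⟨P A B 0, P C D 0⟩ + ∫ t in (0:ℝ)..θ, (R A B C D t)⁻¹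

variable {A B C D : ℝ}

lemma contP : Continuous (P A B) := by unfold P; fun_prop

lemma cos_eq (hdet : A * D - B * C = 1) (θ : ℝ) :
    Real.cos θ = D * P A B θ - B * P C D θ := by
  unfold P; linear_combination (-Real.cos θ) * hdet

lemma sin_eq (hdet : A * D - B * C = 1) (θ : ℝ) :
    Real.sin θ = A * P C D θ - C * P A B θ := by
  unfold P; linear_combination (-Real.sin θ) * hdet

lemma Rpos (hdet : A * D - B * C = 1) (θ : ℝ) : 0 < R A B C D θ := by
  have h0 : (0:ℝ) ≤ R A B C D θ := by unfold R; positivity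
  rcases lt_or_eq_of_le h0 with h | h
  · exact h
  exfalso
  unfold R at h
  have h1 : P A B θ = 0 := by nlinarith [sq_nonneg (P A B θ), sq_nonneg (P C D θ)]
  have h2 : P C D θ = 0 := by nlinarith [sq_nonneg (P A B θ), sq_nonneg (P C D θ)]
  have hc := cos_eq hdet θ
  have hs := sin_eq hdet θ
  rw [h1, h2] at hc hs
  nlinarith [Real.sin_sq_add_cos_sq θ]

lemma contRinv (hdet : A * D - B * C = 1) :
    Continuous (fun θ => (R A B C D θ)⁻¹) := by
  apply Continuous.inv₀
  · unfold R; exact (contP.pow 2).add (contP.pow 2)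
  · exact fun θ => (Rpos hdet θ).ne'

lemma lift_hasDeriv (hdet : A * D - B * C = 1) (θ : ℝ) :
    HasDerivAt (lift A B C D) ((R A B C D θ)⁻¹) θ := by
  unfold lift
  apply HasDerivAt.const_add
  exact intervalIntegral.integral_hasDerivAt_right
    ((contRinv hdet).intervalIntegrable _ _)
    ((contRinv hdet).stronglyMeasurableAtFilter _ _)
    (contRinv hdet).continuousAt

lemma hP' (θ : ℝ) : HasDerivAt (P A B) (B * Real.cos θ - A * Real.sin θ) θ := by
  have := ((Real.hasDerivAt_cos θ).const_mul A).add ((Real.hasDerivAt_sin θ).const_mul B)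
  exact this.congr_deriv (by ring)

lemma lift_strictMono (hdet : A * D - B * C = 1) : StrictMono (lift A B C D) :=
  strictMono_of_deriv_pos (fun θ => by
    rw [(lift_hasDeriv hdet θ).deriv]; exact inv_pos.mpr (Rpos hdet θ))

lemma lift_continuous (hdet : A * D - B * C = 1) : Continuous (lift A B C D) := by
  have : Differentiable ℝ (lift A B C D) := fun θ => (lift_hasDeriv hdet θ).differentiableAt
  exact this.continuous

lemma hW (hdet : A * D - B * C = 1) (t : ℝ) :
    P A B t * (D * Real.cos t - C * Real.sin t)
      - P C D t * (B * Real.cos t - A * Real.sin t) = 1 := by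
  unfold P; linear_combination (A*D - B*C) * (Real.sin_sq_add_cos_sq t) + hdet

lemma Ederiv (hdet : A * D - B * C = 1) (t : ℝ) :
    HasDerivAt (fun t => (Real.cos (lift A B C D t) - P A B t / Real.sqrt (R A B C D t))^2
      + (Real.sin (lift A B C D t) - P C D t / Real.sqrt (R A B C D t))^2) 0 t := by
  have hRpos := Rpos hdet t
  have hrpos : 0 < Real.sqrt (R A B C D t) := Real.sqrt_pos.mpr hRpos
  have hrne := hrpos.ne'
  have hl := lift_hasDeriv hdet t
  have hc : HasDerivAt (fun t => Real.cos (lift A B C D t))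
      (-Real.sin (lift A B C D t) * (R A B C D t)⁻¹) t := hl.cos
  have hs : HasDerivAt (fun t => Real.sin (lift A B C D t))
      (Real.cos (lift A B C D t) * (R A B C D t)⁻¹) t := hl.sin
  have hp1 : HasDerivAt (P A B) (B * Real.cos t - A * Real.sin t) t := hP' t
  have hp2 : HasDerivAt (P C D) (D * Real.cos t - C * Real.sin t) t := hP' t
  have hR : HasDerivAt (R A B C D)
      (2 * P A B t * (B * Real.cos t - A * Real.sin t)
        + 2 * P C D t * (D * Real.cos t - C * Real.sin t)) t := by
    have := ((hp1.pow 2).add (hp2.pow 2))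
    exact this.congr_deriv (by push_cast; ring)
  have hr : HasDerivAt (fun t => Real.sqrt (R A B C D t))
      ((2 * P A B t * (B * Real.cos t - A * Real.sin t)
        + 2 * P C D t * (D * Real.cos t - C * Real.sin t)) / (2 * Real.sqrt (R A B C D t))) t := by
    have h := (Real.hasDerivAt_sqrt hRpos.ne').comp t hR
    exact h.congr_deriv (by ring)
  have hu := hp1.div hr hrne
  have hv := hp2.div hr hrne
  have hE := ((hc.sub hu).pow 2).add ((hs.sub hv).pow 2)
  refine hE.congr_deriv ?_
  simp only [Pi.sub_apply, Pi.div_apply, Nat.cast_ofNat, show (2:ℕ) - 1 = 1 from rfl, pow_one]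
  have hsq : Real.sqrt (R A B C D t) ^ 2 = R A B C D t := Real.sq_sqrt hRpos.le
  have hw := hW hdet t
  set r := Real.sqrt (R A B C D t) with hrdef
  have hsq2 : r ^ 2 = P A B t ^ 2 + P C D t ^ 2 := by rw [hsq]; rfl
  rw [← hsq]
  have hu : r * r⁻¹ = 1 := mul_inv_cancel₀ hrne
  linear_combination
    (2 * (Real.cos (lift A B C D t) - P A B t * r⁻¹) * (B * Real.cos t - A * Real.sin t) * r * r⁻¹ ^ 2 + 2 * (Real.sin (lift A B C D t) - P C D t * r⁻¹) * (D * Real.cos t - C * Real.sin t) * r * r⁻¹ ^ 2) * hu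
    + (2 * (Real.cos (lift A B C D t) - P A B t * r⁻¹) * P C D t * r⁻¹ ^ 3 - 2 * (Real.sin (lift A B C D t) - P C D t * r⁻¹) * P A B t * r⁻¹ ^ 3) * hw
    + (-2 * (Real.cos (lift A B C D t) - P A B t * r⁻¹) * (B * Real.cos t - A * Real.sin t) * r⁻¹ ^ 3 - 2 * (Real.sin (lift A B C D t) - P C D t * r⁻¹) * (D * Real.cos t - C * Real.sin t) * r⁻¹ ^ 3) * hsq2

lemma cos_sin_lift (hdet : A * D - B * C = 1) (θ : ℝ) :
    Real.cos (lift A B C D θ) = P A B θ / Real.sqrt (R A B C D θ)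
      ∧ Real.sin (lift A B C D θ) = P C D θ / Real.sqrt (R A B C D θ) := by
  set E := fun t => (Real.cos (lift A B C D t) - P A B t / Real.sqrt (R A B C D t))^2
      + (Real.sin (lift A B C D t) - P C D t / Real.sqrt (R A B C D t))^2 with hE
  have hE0 : E 0 = 0 := by
    have hR0 := Rpos hdet 0
    have hz : (⟨P A B 0, P C D 0⟩ : ℂ) ≠ 0 := by
      intro h
      rw [Complex.ext_iff] at h
      simp at h
      unfold R at hR0
      rw [h.1, h.2] at hR0
      norm_num at hR0
    have habs : ‖(⟨P A B 0, P C D 0⟩ : ℂ)‖ = Real.sqrt (R A B C D 0) := by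
      rw [Complex.norm_def, Complex.normSq_mk]
      congr 1
      unfold R; ring
    have hl0 : lift A B C D 0 = Complex.arg (⟨P A B 0, P C D 0⟩ : ℂ) := by
      unfold lift; simp
    have hcos := Complex.cos_arg hz
    have hsin := Complex.sin_arg (⟨P A B 0, P C D 0⟩ : ℂ)
    simp only [Complex.ofReal_cos] at hcos hsin
    rw [habs] at hcos hsin
    simp only [hE, hl0]
    rw [hcos, hsin]
    simp
  have hconst : E θ = E 0 :=
    is_const_of_deriv_eq_zero (fun x => (Ederiv hdet x).differentiableAt)
      (fun x => (Ederiv hdet x).deriv) θ 0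
  rw [hE0] at hconst
  simp only [hE] at hconst
  constructor <;> nlinarith [sq_nonneg (Real.cos (lift A B C D θ) - P A B θ / Real.sqrt (R A B C D θ)),
    sq_nonneg (Real.sin (lift A B C D θ) - P C D θ / Real.sqrt (R A B C D θ))]

lemma P_periodic : P A B (θ + 2 * π) = P A B θ := by
  unfold P; rw [Real.cos_add_two_pi, Real.sin_add_two_pi]

lemma lift_two_pi (hdet : A * D - B * C = 1) :
    lift A B C D (2 * π) = lift A B C D 0 + 2 * π := by
  -- cos and sin agree at lift 2π and lift 0
  have hRper : R A B C D (0 + 2*π) = R A B C D 0 := by unfold R; rw [P_periodic, P_periodic]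
  have hc : Real.cos (lift A B C D (2*π)) = Real.cos (lift A B C D 0) := by
    rw [(cos_sin_lift hdet _).1, (cos_sin_lift hdet _).1]
    rw [show (2*π : ℝ) = 0 + 2*π by ring, hRper, P_periodic]
  have hs : Real.sin (lift A B C D (2*π)) = Real.sin (lift A B C D 0) := by
    rw [(cos_sin_lift hdet _).2, (cos_sin_lift hdet _).2]
    rw [show (2*π : ℝ) = 0 + 2*π by ring, hRper, P_periodic]
  -- hence they differ by 2πk
  obtain ⟨k, hk⟩ : ∃ k : ℤ, lift A B C D (2*π) = lift A B C D 0 + k * (2*π) := by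
    have hexp : Complex.exp ((lift A B C D (2*π) : ℂ) * Complex.I)
        = Complex.exp ((lift A B C D 0 : ℂ) * Complex.I) := by
      rw [Complex.exp_mul_I, Complex.exp_mul_I, ← Complex.ofReal_cos, ← Complex.ofReal_sin,
        ← Complex.ofReal_cos, ← Complex.ofReal_sin, hc, hs]
    rw [Complex.exp_eq_exp_iff_exists_int] at hexp
    obtain ⟨n, hn⟩ := hexp
    refine ⟨n, ?_⟩
    have := congrArg Complex.im hn
    simpa using this
  -- k ≥ 1
  have hmono := lift_strictMono hdet
  have hklb : 0 < (k:ℝ) := by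
    have h01 : lift A B C D 0 < lift A B C D (2*π) := hmono (by positivity)
    nlinarith [Real.pi_pos]
  have hk1 : 1 ≤ k := by exact_mod_cast hklb
  -- k ≤ 1
  by_contra hne
  have hk2 : 2 ≤ k := by
    rcases lt_or_eq_of_le hk1 with h | h
    · omega
    · exfalso; apply hne; rw [hk, ← h]; push_cast; ring
  have hk2' : (2:ℝ) ≤ (k:ℝ) := by exact_mod_cast hk2
  have hmem : lift A B C D 0 + 2*π ∈ Set.Ioo (lift A B C D 0) (lift A B C D (2*π)) := by
    constructor
    · nlinarith [Real.pi_pos]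
    · rw [hk]; nlinarith [Real.pi_pos]
  obtain ⟨θ', hθ', hval⟩ := intermediate_value_Ioo (by positivity : (0:ℝ) ≤ 2*π)
    (lift_continuous hdet).continuousOn hmem
  -- cos/sin of lift θ' equal those of lift 0
  have hcθ : Real.cos (lift A B C D θ') = Real.cos (lift A B C D 0) := by
    rw [hval, Real.cos_add_two_pi]
  have hsθ : Real.sin (lift A B C D θ') = Real.sin (lift A B C D 0) := by
    rw [hval, Real.sin_add_two_pi]
  set r' := Real.sqrt (R A B C D θ') with hr'
  set r0 := Real.sqrt (R A B C D 0) with hr0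
  have hr'pos : 0 < r' := Real.sqrt_pos.mpr (Rpos hdet θ')
  have hr0pos : 0 < r0 := Real.sqrt_pos.mpr (Rpos hdet 0)
  have hP1 : P A B θ' = (r'/r0) * P A B 0 := by
    have e1 := (cos_sin_lift hdet θ').1
    have e2 := (cos_sin_lift hdet 0).1
    rw [hcθ, e2] at e1
    rw [← hr', ← hr0, div_eq_div_iff hr0pos.ne' hr'pos.ne'] at e1
    field_simp at e1 ⊢
    linarith [e1]
  have hP2 : P C D θ' = (r'/r0) * P C D 0 := by
    have e1 := (cos_sin_lift hdet θ').2
    have e2 := (cos_sin_lift hdet 0).2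
    rw [hsθ, e2] at e1
    rw [← hr', ← hr0, div_eq_div_iff hr0pos.ne' hr'pos.ne'] at e1
    field_simp at e1 ⊢
    linarith [e1]
  have hcos0 : Real.cos θ' = r'/r0 := by
    rw [cos_eq hdet θ', hP1, hP2]
    have h0 : D * P A B 0 - B * P C D 0 = Real.cos 0 := (cos_eq hdet 0).symm
    rw [show D * ((r'/r0) * P A B 0) - B * ((r'/r0) * P C D 0)
        = (r'/r0) * (D * P A B 0 - B * P C D 0) by ring, h0, Real.cos_zero, mul_one]
  have hsin0 : Real.sin θ' = 0 := by
    rw [sin_eq hdet θ', hP1, hP2]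
    have h0 : A * P C D 0 - C * P A B 0 = Real.sin 0 := (sin_eq hdet 0).symm
    rw [show A * ((r'/r0) * P C D 0) - C * ((r'/r0) * P A B 0)
        = (r'/r0) * (A * P C D 0 - C * P A B 0) by ring, h0, Real.sin_zero, mul_zero]
  have hone : Real.cos θ' = 1 := by
    have := Real.sin_sq_add_cos_sq θ'
    rw [hsin0, hcos0] at this
    have hrr : r'/r0 = 1 := by
      have hpos : 0 < r'/r0 := by positivity
      nlinarith
    rw [hcos0, hrr]
  have := (Real.cos_eq_one_iff_of_lt_of_lt (by nlinarith [Real.pi_pos, hθ'.1] : -(2*π) < θ')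
    (hθ'.2)).mp hone
  exact absurd this (ne_of_gt hθ'.1)


lemma lift_image (hdet : A * D - B * C = 1) :
    lift A B C D '' Set.Ioc 0 (2*π) = Set.Ioc (lift A B C D 0) (lift A B C D 0 + 2*π) := by
  have hmono := lift_strictMono hdet
  apply Set.Subset.antisymm
  · rintro _ ⟨x, hx, rfl⟩
    exact ⟨hmono hx.1, by rw [← lift_two_pi hdet]; exact hmono.monotone hx.2⟩
  · rw [← lift_two_pi hdet]
    exact intermediate_value_Ioc (by positivity) (lift_continuous hdet).continuousOn

lemma key (hdet : A * D - B * C = 1) (G : ℝ → ℂ) (hG : Function.Periodic G (2*π)) :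
    ∫ θ in Set.Ioc (0:ℝ) (2*π), (R A B C D θ)⁻¹ • G (lift A B C D θ)
      = ∫ θ in Set.Ioc (0:ℝ) (2*π), G θ := by
  have h1 : ∫ θ in Set.Ioc (0:ℝ) (2*π), (R A B C D θ)⁻¹ • G (lift A B C D θ)
      = ∫ θ in Set.Ioc (0:ℝ) (2*π), |(R A B C D θ)⁻¹| • G (lift A B C D θ) := by
    congr 1 with θ
    rw [abs_of_pos (inv_pos.mpr (Rpos hdet θ))]
  rw [h1, ← integral_image_eq_integral_abs_deriv_smul measurableSet_Ioc
    (fun x _ => (lift_hasDeriv hdet x).hasDerivWithinAt) (lift_strictMono hdet).injective.injOn G]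
  rw [lift_image hdet]
  rw [← intervalIntegral.integral_of_le (by nlinarith [Real.pi_pos] :
    lift A B C D 0 ≤ lift A B C D 0 + 2*π)]
  rw [hG.intervalIntegral_add_eq (lift A B C D 0) 0]
  rw [intervalIntegral.integral_of_le (by positivity : (0:ℝ) ≤ 0 + 2*π)]
  norm_num


lemma circ_periodic : Function.Periodic circ (2*π) := by
  intro θ; unfold circ; rw [Real.cos_add_two_pi, Real.sin_add_two_pi]

lemma nrm_eq (hdet : A * D - B * C = 1) (θ : ℝ) :
    nrm ![P A B θ, P C D θ] = circ (lift A B C D θ) := by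
  have h := cos_sin_lift hdet θ
  have hv : vnorm ![P A B θ, P C D θ] = Real.sqrt (R A B C D θ) := by
    unfold vnorm R; norm_num
  funext i
  fin_cases i
  · simp only [nrm, hv, circ, Pi.smul_apply]
    rw [h.1]
    norm_num [div_eq_inv_mul]
  · simp only [nrm, hv, circ, Pi.smul_apply]
    rw [h.2]
    norm_num [div_eq_inv_mul]

lemma ip_circ (s t : ℝ) : ip (circ s) (circ t)
    = Real.cos s * Real.cos t + Real.sin s * Real.sin t := by
  simp [ip, circ]

lemma ip_lift (hdet : A * D - B * C = 1) (θ₁ θ₂ : ℝ) :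
    ip (circ θ₁) (circ θ₂)
      = Real.sqrt (R A B C D θ₁) * Real.sqrt (R D (-C) (-B) A θ₂) *
        ip (circ (lift A B C D θ₁)) (circ (lift D (-C) (-B) A θ₂)) := by
  have hdet2 : D * A - (-C) * (-B) = 1 := by linarith
  have h1 := cos_sin_lift hdet θ₁
  have h2 := cos_sin_lift hdet2 θ₂
  have hr1 : (0:ℝ) < Real.sqrt (R A B C D θ₁) := Real.sqrt_pos.mpr (Rpos hdet θ₁)
  have hr2 : (0:ℝ) < Real.sqrt (R D (-C) (-B) A θ₂) := Real.sqrt_pos.mpr (Rpos hdet2 θ₂)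
  rw [ip_circ, ip_circ, h1.1, h1.2, h2.1, h2.2]
  field_simp
  unfold P
  linear_combination (-(Real.cos θ₁ * Real.cos θ₂ + Real.sin θ₁ * Real.sin θ₂)) * hdet

lemma kernel_lift (hdet : A * D - B * C = 1) (θ₁ θ₂ : ℝ) :
    (|ip (circ θ₁) (circ θ₂)| ^ 2)⁻¹
      = (R A B C D θ₁)⁻¹ * ((R D (-C) (-B) A θ₂)⁻¹ *
        (|ip (circ (lift A B C D θ₁)) (circ (lift D (-C) (-B) A θ₂))| ^ 2)⁻¹) := by
  have hdet2 : D * A - (-C) * (-B) = 1 := by linarith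
  rw [ip_lift hdet θ₁ θ₂, abs_mul, abs_mul,
    abs_of_nonneg (Real.sqrt_nonneg _), abs_of_nonneg (Real.sqrt_nonneg _)]
  rw [mul_pow, mul_pow, Real.sq_sqrt (Rpos hdet θ₁).le, Real.sq_sqrt (Rpos hdet2 θ₂).le]
  rw [mul_inv, mul_inv]
  ring


end SxS

open SxS in
/-- The measure `|⟨x,y⟩|^{-2} dx dy` on `S × S` is invariant under the `SL(2,ℝ)`-action
`g.(u,v) = (g.u, θ(g).v)` with `θ(g) = (gᵀ)⁻¹`. -/
theorem measure_invariance_on_SxS (g : Matrix.SpecialLinearGroup (Fin 2) ℝ)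
    (F : (Fin 2 → ℝ) → (Fin 2 → ℝ) → ℂ)
    (hF : IntegrableOn
        (fun p : ℝ × ℝ =>
          F (circ p.1) (circ p.2) * (((|ip (circ p.1) (circ p.2)| ^ 2)⁻¹ : ℝ) : ℂ))
        ((Set.Ioc (0 : ℝ) (2 * π)) ×ˢ (Set.Ioc (0 : ℝ) (2 * π))) volume) :
    (∫ θ₁ in (0 : ℝ)..(2 * π), ∫ θ₂ in (0 : ℝ)..(2 * π),
        F (nrm (g.1.mulVec (circ θ₁))) (nrm (((g.1)ᵀ)⁻¹.mulVec (circ θ₂))) *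
          (((|ip (circ θ₁) (circ θ₂)| ^ 2)⁻¹ : ℝ) : ℂ))
      = ∫ θ₁ in (0 : ℝ)..(2 * π), ∫ θ₂ in (0 : ℝ)..(2 * π),
          F (circ θ₁) (circ θ₂) * (((|ip (circ θ₁) (circ θ₂)| ^ 2)⁻¹ : ℝ) : ℂ) := by
  set A := g.1 0 0 with hA
  set B := g.1 0 1 with hB
  set C := g.1 1 0 with hC
  set D := g.1 1 1 with hD
  have hdet : A * D - B * C = 1 := by
    have h := g.2
    rwa [Matrix.det_fin_two] at h
  have hdet2 : D * A - (-C) * (-B) = 1 := by linarith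
  have h2pi : (0:ℝ) ≤ 2 * π := by positivity
  have hinv : ((g.1)ᵀ)⁻¹ = !![D, -C; -B, A] := by
    apply Matrix.inv_eq_right_inv
    ext i j
    fin_cases i <;> fin_cases j <;>
      simp [Matrix.mul_apply, Fin.sum_univ_two, Matrix.one_apply] <;> linarith
  have hmv1 : ∀ θ, g.1.mulVec (circ θ) = ![P A B θ, P C D θ] := by
    intro θ; funext i; fin_cases i <;>
      simp [Matrix.mulVec, dotProduct, Fin.sum_univ_two, circ, P] <;> rfl
  have hmv2 : ∀ θ, (!![D, -C; -B, A]).mulVec (circ θ) = ![P D (-C) θ, P (-B) A θ] := by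
    intro θ; funext i; fin_cases i <;>
      simp [Matrix.mulVec, dotProduct, Fin.sum_univ_two, circ, P] <;> ring
  set G : ℝ → ℝ → ℂ := fun s t =>
    F (circ s) (circ t) * (((|ip (circ s) (circ t)| ^ 2)⁻¹ : ℝ) : ℂ) with hG
  have hGper1 : ∀ t, Function.Periodic (fun s => G s t) (2*π) := by
    intro t s; simp only [hG, circ_periodic s]
  have hGper2 : ∀ s, Function.Periodic (G s) (2*π) := by
    intro s t; simp only [hG, circ_periodic t]
  set l₁ := lift A B C D with hl₁
  set l₂ := lift D (-C) (-B) A with hl₂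
  set H : ℝ → ℂ := fun s => ∫ t in Set.Ioc (0:ℝ) (2*π), G s t with hH
  have hHper : Function.Periodic H (2*π) := by
    intro s; simp only [hH]; congr 1 with t; exact hGper1 t s
  have step1 : ∀ θ₁ : ℝ, (∫ θ₂ in (0:ℝ)..(2*π),
      F (nrm (g.1.mulVec (circ θ₁))) (nrm (((g.1)ᵀ)⁻¹.mulVec (circ θ₂))) *
        (((|ip (circ θ₁) (circ θ₂)| ^ 2)⁻¹ : ℝ) : ℂ))
      = (R A B C D θ₁)⁻¹ • H (l₁ θ₁) := by
    intro θ₁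
    rw [intervalIntegral.integral_of_le h2pi]
    have hpt : (fun θ₂ => F (nrm (g.1.mulVec (circ θ₁))) (nrm (((g.1)ᵀ)⁻¹.mulVec (circ θ₂))) *
        (((|ip (circ θ₁) (circ θ₂)| ^ 2)⁻¹ : ℝ) : ℂ))
        = fun θ₂ => (R A B C D θ₁)⁻¹ • ((R D (-C) (-B) A θ₂)⁻¹ • G (l₁ θ₁) (l₂ θ₂)) := by
      funext θ₂
      rw [hmv1, hinv, hmv2, nrm_eq hdet, nrm_eq hdet2, kernel_lift hdet]
      simp only [hG, Complex.real_smul, ← hl₁, ← hl₂]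
      push_cast
      ring
    rw [hpt, integral_smul]
    congr 1
    exact key hdet2 (G (l₁ θ₁)) (hGper2 (l₁ θ₁))
  calc (∫ θ₁ in (0 : ℝ)..(2 * π), ∫ θ₂ in (0 : ℝ)..(2 * π),
        F (nrm (g.1.mulVec (circ θ₁))) (nrm (((g.1)ᵀ)⁻¹.mulVec (circ θ₂))) *
          (((|ip (circ θ₁) (circ θ₂)| ^ 2)⁻¹ : ℝ) : ℂ))
      = ∫ θ₁ in Set.Ioc (0:ℝ) (2*π), (R A B C D θ₁)⁻¹ • H (l₁ θ₁) := by
        rw [intervalIntegral.integral_of_le h2pi]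
        congr 1 with θ₁
        exact step1 θ₁
    _ = ∫ s in Set.Ioc (0:ℝ) (2*π), H s := key hdet H hHper
    _ = ∫ θ₁ in (0 : ℝ)..(2 * π), ∫ θ₂ in (0 : ℝ)..(2 * π),
          F (circ θ₁) (circ θ₂) * (((|ip (circ θ₁) (circ θ₂)| ^ 2)⁻¹ : ℝ) : ℂ) := by
        rw [intervalIntegral.integral_of_le h2pi]
        congr 1 with θ₁
        rw [intervalIntegral.integral_of_le h2pi]
end
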